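/- arXiv:2404.04454 — 7 statements merged into one kernel-verified Lean document; each statement's English description precedes it below -/
import Mathlib

section
/- Consider iterates x_t = (1 − λη_t) x_{t−1} − η_t Δ_t with λη_t < 1 and ‖Δ_t‖ ≤ 1 for all t ≥ 1. Then for every t, ‖x_t‖ − 1/λ ≤ max( e^{−λ Σ_{i=1}^t η_i} (‖x_0‖ − 1/λ), 0 ). -/
open scoped RealInnerProductSpace BigOperators
open Filter Finset

/-- `N` is a norm on `ℝ^d`. -/
def IsNorm {d : ℕ} (N : EuclideanSpace ℝ (Fin d) → ℝ) : Prop :=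
  (∀ x, N x = 0 ↔ x = 0) ∧ (∀ (c : ℝ) (x), N (c • x) = |c| * N x) ∧
    (∀ x y, N (x + y) ≤ N x + N y)

/-- `D` is the dual norm of `N`: `D g` is the maximum of `⟪g, x⟫` over the unit ball of `N`
(the supremum is attained in finite dimension). -/
def IsDualNorm {d : ℕ} (N D : EuclideanSpace ℝ (Fin d) → ℝ) : Prop :=
  ∀ g, IsGreatest {r : ℝ | ∃ x, N x ≤ 1 ∧ r = ⟪g, x⟫} (D g)

/-- `g` is a subgradient of the convex function `f` at `x`. -/
def SubgradientAt {d : ℕ} (f : EuclideanSpace ℝ (Fin d) → ℝ)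
    (x g : EuclideanSpace ℝ (Fin d)) : Prop :=
  ∀ y, f x + ⟪y - x, g⟫ ≤ f y

/-! Each step is a contraction towards the ball of radius `1/λ`: by the triangle inequality,
`‖x_t‖ - 1/λ ≤ (1 - λη_t)(‖x_{t-1}‖ - 1/λ)`. Hence the positive part of `‖x_t‖ - 1/λ` is
multiplied by at most `1 - λη_t ≤ exp(-λη_t)` at every step. -/

namespace IsNorm

variable {d : ℕ} {N : EuclideanSpace ℝ (Fin d) → ℝ}

theorem map_neg (hN : IsNorm N) (v : EuclideanSpace ℝ (Fin d)) : N (-v) = N v := by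
  simpa using hN.2.1 (-1) v

theorem map_smul_sub_smul_le (hN : IsNorm N) {a b : ℝ} (ha : 0 ≤ a) (hb : 0 ≤ b)
    (x y : EuclideanSpace ℝ (Fin d)) : N (a • x - b • y) ≤ a * N x + b * N y := by
  calc N (a • x - b • y) ≤ N (a • x) + N (-(b • y)) := by
        rw [sub_eq_add_neg]; exact hN.2.2 _ _
    _ = a * N x + b * N y := by
        rw [hN.map_neg, hN.2.1, hN.2.1, abs_of_nonneg ha, abs_of_nonneg hb]

theorem sub_inv_le_of_weight_decay_step (hN : IsNorm N) {lam η : ℝ} (hlam : 0 < lam)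
    (hη : 0 < η) (hle : lam * η < 1) {x Δ : EuclideanSpace ℝ (Fin d)} (hΔ : N Δ ≤ 1) :
    N ((1 - lam * η) • x - η • Δ) - 1 / lam ≤ (1 - lam * η) * (N x - 1 / lam) := by
  have hstep := hN.map_smul_sub_smul_le (sub_nonneg.mpr hle.le) hη.le x Δ
  have hshift : (1 - lam * η) * (1 / lam) = 1 / lam - η := by field_simp
  linarith [mul_le_mul_of_nonneg_left hΔ hη.le]

end IsNorm

theorem le_max_exp_neg_sum_mul_of_le_one_sub_mul {u c : ℕ → ℝ} (hc : ∀ t, 1 ≤ t → c t ≤ 1)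
    (hu : ∀ t, u (t + 1) ≤ (1 - c (t + 1)) * u t) (t : ℕ) :
    u t ≤ max (Real.exp (-∑ i ∈ Icc 1 t, c i) * u 0) 0 := by
  induction t with
  | zero => simp
  | succ t ih =>
    set M := max (Real.exp (-∑ i ∈ Icc 1 t, c i) * u 0) 0
    have hM : 0 ≤ M := le_max_right _ _
    have hcontr : 0 ≤ 1 - c (t + 1) := sub_nonneg.mpr (hc _ t.succ_pos)
    have hexp : 1 - c (t + 1) ≤ Real.exp (-c (t + 1)) := by
      linarith [Real.add_one_le_exp (-c (t + 1))]
    calc u (t + 1) ≤ (1 - c (t + 1)) * u t := hu t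
      _ ≤ (1 - c (t + 1)) * M := mul_le_mul_of_nonneg_left ih hcontr
      _ ≤ Real.exp (-c (t + 1)) * M := mul_le_mul_of_nonneg_right hexp hM
      _ = max (Real.exp (-∑ i ∈ Icc 1 (t + 1), c i) * u 0) 0 := by
        rw [mul_max_of_nonneg _ _ (Real.exp_pos _).le, mul_zero, ← mul_assoc, ← Real.exp_add,
          sum_Icc_succ_top t.succ_pos, neg_add, add_comm]

/-- for iterates `x_t = (1 - λη_t) x_{t-1} - η_t Δ_t` with `λη_t < 1` and
`N Δ_t ≤ 1`, we have `N x_t - 1/λ ≤ max (exp(-λ Σ_{i=1}^t η_i) (N x_0 - 1/λ)) 0`. -/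
theorem norm_iterate_le_max_exp {d : ℕ} (N : EuclideanSpace ℝ (Fin d) → ℝ) (hN : IsNorm N)
    (lam : ℝ) (hlam : 0 < lam) (η : ℕ → ℝ) (Δ x : ℕ → EuclideanSpace ℝ (Fin d))
    (hη : ∀ t, 1 ≤ t → 0 < η t) (hle : ∀ t, 1 ≤ t → lam * η t < 1)
    (hΔ : ∀ t, 1 ≤ t → N (Δ t) ≤ 1)
    (hx : ∀ t, 1 ≤ t → x t = (1 - lam * η t) • x (t - 1) - η t • Δ t) :
    ∀ t, N (x t) - 1 / lam ≤
      max (Real.exp (-lam * ∑ i ∈ Finset.Icc 1 t, η i) * (N (x 0) - 1 / lam)) 0 := by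
  intro t
  rw [neg_mul, mul_sum]
  refine le_max_exp_neg_sum_mul_of_le_one_sub_mul (u := fun t ↦ N (x t) - 1 / lam)
    (fun t ht ↦ (hle t ht).le) (fun t ↦ ?_) t
  rw [hx (t + 1) t.succ_pos, Nat.add_sub_cancel]
  exact hN.sub_inv_le_of_weight_decay_step hlam (hη _ t.succ_pos) (hle _ t.succ_pos)
    (hΔ _ t.succ_pos)
end

section
/- Normalized steepest descent with weight decay coincides with Frank–Wolfe: if ‖x_{t−1}‖ ≤ 1/λ and η_t < 1/λ, then the point x_t = (1 − λη_t)x_{t−1} − η_t Δ_t with Δ_t ∈ argmax_{‖Δ‖≤1} ⟨∇L(x_{t−1}), Δ⟩ is equal to the Frank–Wolfe update (1 − γ_t)x_{t−1} + γ_t y_t where γ_t = λη_t and y_t ∈ argmin_{‖y‖≤1/λ} ⟨∇L(x_{t−1}), y⟩. -/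
open scoped RealInnerProductSpace BigOperators
open Filter Finset

/-- normalized steepest descent with weight decay coincides with Frank–Wolfe:
if `N x ≤ 1/λ`, `η < 1/λ`, and `Δ` maximizes `⟪∇L(x), ·⟫` over `{N ≤ 1}`, then with
`y := -(1/λ) • Δ`, the point `y` minimizes `⟪∇L(x), ·⟫` over `{N ≤ 1/λ}` and the NSD-WD step
`(1 - λη) • x - η • Δ` equals the Frank–Wolfe step `(1 - γ) • x + γ • y` with `γ = λη`. -/
theorem nsd_wd_eq_frank_wolfe {d : ℕ} (N : EuclideanSpace ℝ (Fin d) → ℝ) (hN : IsNorm N)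
    (lam η : ℝ) (hlam : 0 < lam) (hη : 0 < η) (hη' : η < 1 / lam)
    (L : EuclideanSpace ℝ (Fin d) → ℝ) (g x Δ : EuclideanSpace ℝ (Fin d))
    (hg : HasGradientAt L g x)
    (hxball : N x ≤ 1 / lam) (hΔ : N Δ ≤ 1)
    (hmax : ∀ Δ', N Δ' ≤ 1 → ⟪g, Δ'⟫ ≤ ⟪g, Δ⟫) :
    (N ((-(1 / lam)) • Δ) ≤ 1 / lam ∧
        ∀ y', N y' ≤ 1 / lam → ⟪g, (-(1 / lam)) • Δ⟫ ≤ ⟪g, y'⟫) ∧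
      (1 - lam * η) • x - η • Δ = (1 - lam * η) • x + (lam * η) • ((-(1 / lam)) • Δ) := by
  obtain ⟨hN0, hNs, hNt⟩ := hN
  have hlam' : lam ≠ 0 := ne_of_gt hlam
  refine ⟨⟨?_, ?_⟩, ?_⟩
  · rw [hNs]
    rw [abs_neg, abs_of_pos (by positivity : (0:ℝ) < 1 / lam)]
    calc 1 / lam * N Δ ≤ 1 / lam * 1 := by
          apply mul_le_mul_of_nonneg_left hΔ (by positivity)
      _ = 1 / lam := by ring
  · intro y' hy'
    have h1 : N ((-lam) • y') ≤ 1 := by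
      rw [hNs, abs_neg, abs_of_pos hlam]
      calc lam * N y' ≤ lam * (1 / lam) := by
            apply mul_le_mul_of_nonneg_left hy' (le_of_lt hlam)
        _ = 1 := by field_simp
    have h2 := hmax _ h1
    rw [real_inner_smul_right] at h2 ⊢
    have h3 : -⟪g, Δ⟫ ≤ lam * ⟪g, y'⟫ := by linarith
    calc -(1 / lam) * ⟪g, Δ⟫ = (1 / lam) * (-⟪g, Δ⟫) := by ring
      _ ≤ (1 / lam) * (lam * ⟪g, y'⟫) := by
          apply mul_le_mul_of_nonneg_left h3 (by positivity)
      _ = ⟪g, y'⟫ := by field_simp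
  · rw [smul_smul]
    have : lam * η * (-(1 / lam)) = -η := by field_simp
    rw [this, neg_smul, sub_eq_add_neg]
end

section
/- O(1/t) convergence of normalized steepest descent with weight decay: let L be convex with H-Lipschitz gradient w.r.t. ‖·‖, x* a minimizer of L over {‖x‖ ≤ 1/λ}, B = max(‖x_0‖, 1/λ), and run x_t = (1 − λη_t)x_{t−1} − η_t Δ_t with η_t = 2/(λ(t+1)) and Δ_t a unit-norm steepest descent direction. Then L(x_t) − L(x*) ≤ 2H(1 + λB)² / ((t+2)λ²) for all t ≥ 1. -/
open scoped RealInnerProductSpace BigOperators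
open Filter Finset

/-- `O(1/t)` convergence of normalized steepest descent with weight decay,
with step sizes `η_t = 2/(λ(t+1))`, assuming (as in the paper's proof) the one-step
descent inequality and the bound `N x_t ≤ B` with `B = max (N x_0) (1/λ)`. -/
theorem nsd_wd_one_over_t_convergence {d : ℕ} (N D : EuclideanSpace ℝ (Fin d) → ℝ)
    (hN : IsNorm N) (hD : IsDualNorm N D) (H lam : ℝ) (hH : 0 < H) (hlam : 0 < lam)
    (L : EuclideanSpace ℝ (Fin d) → ℝ) (G : EuclideanSpace ℝ (Fin d) → EuclideanSpace ℝ (Fin d))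
    (hG : ∀ x, HasGradientAt L (G x) x)
    (hconv : ConvexOn ℝ Set.univ L)
    (hlip : ∀ x y, D (G x - G y) ≤ H * N (x - y))
    (x : ℕ → EuclideanSpace ℝ (Fin d)) (Δ : ℕ → EuclideanSpace ℝ (Fin d))
    (xstar : EuclideanSpace ℝ (Fin d))
    (hstar_ball : N xstar ≤ 1 / lam) (hstar_min : ∀ y, N y ≤ 1 / lam → L xstar ≤ L y)
    (η : ℕ → ℝ) (hη : ∀ t, 1 ≤ t → η t = 2 / (lam * (t + 1)))
    (hΔnorm : ∀ t, 1 ≤ t → N (Δ t) = 1)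
    (hΔsd : ∀ t, 1 ≤ t → ⟪Δ t, G (x (t - 1))⟫ = D (G (x (t - 1))))
    (hx : ∀ t, 1 ≤ t → x t = (1 - lam * η t) • x (t - 1) - η t • Δ t)
    (B : ℝ) (hB : B = max (N (x 0)) (1 / lam))
    (hdesc : ∀ t, 1 ≤ t → L (x t) - L xstar ≤
        (1 - lam * η t) * (L (x (t - 1)) - L xstar) +
          H / 2 * η t ^ 2 * (1 + lam * N (x (t - 1))) ^ 2)
    (hbound : ∀ t, N (x t) ≤ B) :
    ∀ t, 1 ≤ t → L (x t) - L xstar ≤ 2 * H * (1 + lam * B) ^ 2 / ((t + 2) * lam ^ 2) := by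
  have hNnonneg : ∀ v, (0:ℝ) ≤ N v := by
    intro v
    have h0 : N (v + (-1) • v) = 0 := by
      have : v + (-1) • v = 0 := by simp
      rw [this]; exact (hN.1 0).mpr rfl
    have hneg : N ((-1) • v) = N v := by
      have := hN.2.1 (-1) v; simpa using this
    have htri := hN.2.2 v ((-1) • v)
    rw [h0, hneg] at htri
    linarith
  have hlamne : lam ≠ 0 := ne_of_gt hlam
  have hBpos : 0 < B := lt_of_lt_of_le (by positivity) (hB ▸ le_max_right _ _)
  have hC : (0:ℝ) ≤ (1 + lam * B) ^ 2 := sq_nonneg _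
  have hl2 : (0:ℝ) < lam ^ 2 := by positivity
  have hsq : ∀ t : ℕ, (1 + lam * N (x t)) ^ 2 ≤ (1 + lam * B) ^ 2 := by
    intro t
    have h1 := hNnonneg (x t)
    have h2 := hbound t
    have h3 : (0:ℝ) ≤ lam * N (x t) := mul_nonneg hlam.le h1
    have h4 : 1 + lam * N (x t) ≤ 1 + lam * B := by nlinarith
    exact pow_le_pow_left₀ (by linarith) h4 2
  intro t ht
  induction t, ht using Nat.le_induction with
  | base =>
    have hd := hdesc 1 le_rfl
    rw [hη 1 le_rfl] at hd
    rw [show (1:ℕ) - 1 = 0 from rfl] at hd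
    push_cast at hd ⊢
    have hz : (1:ℝ) - lam * (2 / (lam * (1 + 1))) = 0 := by field_simp; ring
    rw [hz, zero_mul, zero_add] at hd
    have key : H / 2 * (2 / (lam * (1 + 1))) ^ 2 * (1 + lam * N (x 0)) ^ 2 ≤
        2 * H * (1 + lam * B) ^ 2 / ((1 + 2) * lam ^ 2) := by
      have e : H / 2 * (2 / (lam * (1 + 1))) ^ 2 * (1 + lam * N (x 0)) ^ 2 =
          H * (1 + lam * N (x 0)) ^ 2 / (2 * lam ^ 2) := by
        field_simp; ring
      rw [e, div_le_div_iff₀ (by positivity) (by positivity)]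
      nlinarith [mul_le_mul_of_nonneg_left (hsq 0) (mul_pos hH hl2).le, mul_nonneg (mul_pos hH hl2).le hC]
    linarith
  | succ t ht ih =>
    have hd := hdesc (t + 1) (by omega)
    rw [hη (t + 1) (by omega)] at hd
    rw [show t + 1 - 1 = t from rfl] at hd
    have hs1 : (1:ℝ) ≤ (t:ℝ) := by exact_mod_cast ht
    have hcoef : (0:ℝ) ≤ 1 - lam * (2 / (lam * (↑(t + 1) + 1))) := by
      push_cast
      rw [sub_nonneg, mul_div_assoc', div_le_one (by positivity)]
      nlinarith
    have h3 : (0:ℝ) ≤ H / 2 * (2 / (lam * (↑(t + 1) + 1))) ^ 2 := by positivity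
    have hdd : L (x (t + 1)) - L xstar ≤
        (1 - lam * (2 / (lam * (↑(t + 1) + 1)))) *
            (2 * H * (1 + lam * B) ^ 2 / (((t:ℝ) + 2) * lam ^ 2)) +
          H / 2 * (2 / (lam * (↑(t + 1) + 1))) ^ 2 * (1 + lam * B) ^ 2 := by
      have m1 := mul_le_mul_of_nonneg_left ih hcoef
      have m2 := mul_le_mul_of_nonneg_left (hsq t) h3
      linarith
    refine hdd.trans ?_
    push_cast
    have key : (1 - lam * (2 / (lam * ((t:ℝ) + 1 + 1)))) = (t:ℝ) / ((t:ℝ) + 2) := by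
      field_simp; ring
    rw [key]
    have e1 : (t:ℝ) / ((t:ℝ) + 2) * (2 * H * (1 + lam * B) ^ 2 / (((t:ℝ) + 2) * lam ^ 2)) +
        H / 2 * (2 / (lam * ((t:ℝ) + 1 + 1))) ^ 2 * (1 + lam * B) ^ 2 =
        2 * H * (1 + lam * B) ^ 2 * ((t:ℝ) + 1) / (((t:ℝ) + 2) ^ 2 * lam ^ 2) := by
      field_simp
      ring
    rw [e1, div_le_div_iff₀ (by positivity) (by positivity)]
    have hHC : (0:ℝ) ≤ 2 * H * (1 + lam * B) ^ 2 := by positivity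
    clear hd hdd hcoef h3 key e1 hdesc hη hx hstar_ball hstar_min ih
    nlinarith [mul_nonneg hHC hl2.le, hs1]
end

section
/- If x_t → x_∞, ∇L is continuous, ‖Δ_t‖ ≤ 1, ⟨∇L(x_{t−1}), Δ_t⟩ = ‖∇L(x_{t−1})‖_* for all t, Σ η_t = ∞, and the weighted average Δ_∞ = lim_T (Σ_{t=1}^T η_t Δ_t)/(Σ_{t=1}^T η_t) exists, then ⟨∇L(x_∞), Δ_∞⟩ = ‖∇L(x_∞)‖_* and ‖Δ_∞‖ ≤ 1. -/
/-!
The unit ball of `N` is closed and convex, so it contains the weighted averages of the `Δ_t`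
and hence their limit `Δ_∞`. The dual norm is convex and finite, hence continuous; squeezing
`⟪∇L(x_∞), Δ_t⟫` between `D(∇L(x_{t-1})) - D(∇L(x_{t-1}) - ∇L(x_∞))` and `D(∇L(x_∞))` shows that
it tends to `D(∇L(x_∞))`. Weighted Cesàro means with divergent weights keep this limit, and they
are the pairings of `∇L(x_∞)` with the averages of the `Δ_t`, which tend to `Δ_∞`.
-/

open scoped RealInnerProductSpace BigOperators
open Filter Finset

open Topology

namespace Finset

theorem sum_Icc_one_eq_sum_range {M : Type*} [AddCommMonoid M] (f : ℕ → M) (n : ℕ) :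
    ∑ i ∈ Icc 1 n, f i = ∑ i ∈ range n, f (i + 1) := by
  rw [← Ico_add_one_right_eq_Icc, sum_Ico_eq_sum_range, Nat.add_sub_cancel]
  simp only [Nat.add_comm 1]

theorem centerMass_Icc_one {R E : Type*} [Field R] [AddCommGroup E] [Module R E]
    (w : ℕ → R) (z : ℕ → E) (n : ℕ) :
    (Icc 1 n).centerMass w z = (range n).centerMass (fun i => w (i + 1)) (fun i => z (i + 1)) := by
  simp only [centerMass, sum_Icc_one_eq_sum_range]

end Finset

theorem LinearMap.map_centerMass {R E F ι : Type*} [Field R] [AddCommGroup E] [Module R E]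
    [AddCommGroup F] [Module R F] (f : E →ₗ[R] F) (t : Finset ι) (w : ι → R) (z : ι → E) :
    f (t.centerMass w z) = t.centerMass w (f ∘ z) := by
  simp only [Finset.centerMass, map_smul, map_sum, Function.comp_apply]

section WeightedCesaro

variable {E : Type*} [NormedAddCommGroup E] [NormedSpace ℝ E] {w : ℕ → ℝ} {z : ℕ → E} {l : E}

theorem Filter.Tendsto.centerMass_range (hz : Tendsto z atTop (𝓝 l)) (hw : 0 ≤ w)
    (hsum : Tendsto (fun n => ∑ i ∈ range n, w i) atTop atTop) :
    Tendsto (fun n => (range n).centerMass w z) atTop (𝓝 l) := by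
  rw [← tendsto_sub_nhds_zero_iff]
  have hsmall : (fun i => w i • (z i - l)) =o[atTop] w := by
    simpa using (Asymptotics.isBigO_refl w atTop).smul_isLittleO
      ((Asymptotics.isLittleO_one_iff ℝ).2 (tendsto_sub_nhds_zero_iff.2 hz))
  refine ((hsmall.sum_range hw hsum).tendsto_inv_smul_nhds_zero).congr' ?_
  filter_upwards [hsum.eventually_gt_atTop 0] with n hn
  simp only [Finset.centerMass, smul_sub, sum_sub_distrib, ← sum_smul, smul_smul,
    inv_mul_cancel₀ hn.ne', one_smul]

theorem Filter.Tendsto.centerMass_Icc_one (hz : Tendsto z atTop (𝓝 l))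
    (hw : ∀ i, 1 ≤ i → 0 ≤ w i) (hsum : Tendsto (fun n => ∑ i ∈ Icc 1 n, w i) atTop atTop) :
    Tendsto (fun n => (Icc 1 n).centerMass w z) atTop (𝓝 l) := by
  simp only [Finset.centerMass_Icc_one]
  refine (hz.comp (tendsto_add_atTop_nat 1)).centerMass_range
    (fun i => hw _ (Nat.le_add_left 1 i)) ?_
  simpa only [sum_Icc_one_eq_sum_range] using hsum

end WeightedCesaro

section DualNorm

variable {d : ℕ} {N D : EuclideanSpace ℝ (Fin d) → ℝ}

theorem IsNorm.convexOn (hN : IsNorm N) : ConvexOn ℝ Set.univ N := by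
  refine ⟨convex_univ, fun x _ y _ a b ha hb _ => ?_⟩
  calc N (a • x + b • y) ≤ N (a • x) + N (b • y) := hN.2.2 _ _
    _ = a • N x + b • N y := by
      rw [hN.2.1, hN.2.1, abs_of_nonneg ha, abs_of_nonneg hb, smul_eq_mul, smul_eq_mul]

theorem IsNorm.continuous (hN : IsNorm N) : Continuous N :=
  continuousOn_univ.1 (hN.convexOn.continuousOn isOpen_univ)

theorem IsDualNorm.inner_le (hD : IsDualNorm N D) (g : EuclideanSpace ℝ (Fin d))
    {x : EuclideanSpace ℝ (Fin d)} (hx : N x ≤ 1) : ⟪g, x⟫ ≤ D g :=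
  (hD g).2 ⟨x, hx, rfl⟩

theorem IsDualNorm.map_zero (hD : IsDualNorm N D) : D 0 = 0 := by
  obtain ⟨x, -, hx⟩ := (hD 0).1
  rw [hx, inner_zero_left]

theorem IsDualNorm.convexOn (hD : IsDualNorm N D) : ConvexOn ℝ Set.univ D := by
  refine ⟨convex_univ, fun g _ h _ a b ha hb _ => ?_⟩
  obtain ⟨x, hx, hmax⟩ := (hD (a • g + b • h)).1
  rw [hmax, inner_add_left, real_inner_smul_left, real_inner_smul_left, smul_eq_mul, smul_eq_mul]
  gcongr <;> exact hD.inner_le _ hx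

theorem IsDualNorm.continuous (hD : IsDualNorm N D) : Continuous D :=
  continuousOn_univ.1 (hD.convexOn.continuousOn isOpen_univ)

theorem IsDualNorm.tendsto_inner_of_tendsto {ι : Type*} {l : Filter ι} (hD : IsDualNorm N D)
    {g Δ : ι → EuclideanSpace ℝ (Fin d)} {g₀ : EuclideanSpace ℝ (Fin d)}
    (hg : Tendsto g l (𝓝 g₀)) (hΔ : ∀ᶠ i in l, N (Δ i) ≤ 1)
    (hsd : ∀ᶠ i in l, ⟪g i, Δ i⟫ = D (g i)) :
    Tendsto (fun i => ⟪g₀, Δ i⟫) l (𝓝 (D g₀)) := by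
  have hlower : Tendsto (fun i => D (g i) - D (g i - g₀)) l (𝓝 (D g₀)) := by
    simpa [hD.map_zero] using ((hD.continuous.tendsto g₀).comp hg).sub
      ((hD.continuous.tendsto 0).comp (by simpa using hg.sub_const g₀))
  refine tendsto_of_tendsto_of_tendsto_of_le_of_le' hlower tendsto_const_nhds ?_ ?_
  · filter_upwards [hΔ, hsd] with i hi hsdi
    have := hD.inner_le (g i - g₀) hi
    rw [inner_sub_left, hsdi] at this
    linarith
  · filter_upwards [hΔ] with i hi using hD.inner_le g₀ hi

end DualNorm

theorem limit_update_properties_general {d : ℕ} (N D : EuclideanSpace ℝ (Fin d) → ℝ)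
    (hN : IsNorm N) (hD : IsDualNorm N D)
    (G : EuclideanSpace ℝ (Fin d) → EuclideanSpace ℝ (Fin d))
    (hGcont : Continuous G)
    (η : ℕ → ℝ) (hη : ∀ t, 1 ≤ t → 0 < η t)
    (hdiv : Filter.Tendsto (fun T => ∑ t ∈ Finset.Icc 1 T, η t) Filter.atTop Filter.atTop)
    (x Δ : ℕ → EuclideanSpace ℝ (Fin d)) (xinf Δinf : EuclideanSpace ℝ (Fin d))
    (hxconv : Filter.Tendsto x Filter.atTop (nhds xinf))
    (hΔnorm : ∀ t, 1 ≤ t → N (Δ t) ≤ 1)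
    (hΔsd : ∀ t, 1 ≤ t → ⟪G (x (t - 1)), Δ t⟫ = D (G (x (t - 1))))
    (hΔconv : Filter.Tendsto
      (fun T => (∑ t ∈ Finset.Icc 1 T, η t)⁻¹ • ∑ t ∈ Finset.Icc 1 T, η t • Δ t)
      Filter.atTop (nhds Δinf)) :
    ⟪G xinf, Δinf⟫ = D (G xinf) ∧ N Δinf ≤ 1 := by
  have hconv : Convex ℝ {y | N y ≤ 1} := by
    simpa only [Set.sep_univ] using hN.convexOn.convex_le 1
  have hball : N Δinf ≤ 1 := by
    refine (isClosed_le hN.continuous continuous_const).mem_of_tendsto hΔconv ?_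
    filter_upwards [eventually_ge_atTop 1] with T hT
    exact hconv.centerMass_mem (fun t ht => (hη t (mem_Icc.1 ht).1).le)
      (sum_pos (fun t ht => hη t (mem_Icc.1 ht).1) (nonempty_Icc.2 hT))
      (fun t ht => hΔnorm t (mem_Icc.1 ht).1)
  refine ⟨?_, hball⟩
  have hsteepest : Tendsto (fun t => ⟪G xinf, Δ t⟫) atTop (𝓝 (D (G xinf))) :=
    hD.tendsto_inner_of_tendsto
      ((hGcont.tendsto xinf).comp (hxconv.comp (tendsto_sub_atTop_nat 1)))
      ((eventually_ge_atTop 1).mono hΔnorm) ((eventually_ge_atTop 1).mono hΔsd)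
  have hmean := hsteepest.centerMass_Icc_one (fun t ht => (hη t ht).le) hdiv
  refine tendsto_nhds_unique ((tendsto_const_nhds.inner hΔconv).congr fun T => ?_) hmean
  exact (innerₛₗ ℝ (G xinf)).map_centerMass _ _ _

/-- if `x_t → x_∞`, `∇L` is continuous, `N Δ_t ≤ 1`,
`⟪∇L(x_{t-1}), Δ_t⟫ = ‖∇L(x_{t-1})‖_*` for all `t ≥ 1`, `Σ η_t = ∞`, and the weighted
average `Δ_∞` of the updates exists, then `⟪∇L(x_∞), Δ_∞⟫ = ‖∇L(x_∞)‖_*` and `N Δ_∞ ≤ 1`. -/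
theorem limit_update_properties {d : ℕ} (N D : EuclideanSpace ℝ (Fin d) → ℝ)
    (hN : IsNorm N) (hD : IsDualNorm N D)
    (L : EuclideanSpace ℝ (Fin d) → ℝ) (G : EuclideanSpace ℝ (Fin d) → EuclideanSpace ℝ (Fin d))
    (hG : ∀ y, HasGradientAt L (G y) y) (hGcont : Continuous G)
    (η : ℕ → ℝ) (hη : ∀ t, 1 ≤ t → 0 < η t)
    (hdiv : Filter.Tendsto (fun T => ∑ t ∈ Finset.Icc 1 T, η t) Filter.atTop Filter.atTop)
    (x Δ : ℕ → EuclideanSpace ℝ (Fin d)) (xinf Δinf : EuclideanSpace ℝ (Fin d))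
    (hxconv : Filter.Tendsto x Filter.atTop (nhds xinf))
    (hΔnorm : ∀ t, 1 ≤ t → N (Δ t) ≤ 1)
    (hΔsd : ∀ t, 1 ≤ t → ⟪G (x (t - 1)), Δ t⟫ = D (G (x (t - 1))))
    (hΔconv : Filter.Tendsto
      (fun T => (∑ t ∈ Finset.Icc 1 T, η t)⁻¹ • ∑ t ∈ Finset.Icc 1 T, η t • Δ t)
      Filter.atTop (nhds Δinf)) :
    ⟪G xinf, Δinf⟫ = D (G xinf) ∧ N Δinf ≤ 1 :=
  limit_update_properties_general N D hN hD G hGcont η hη hdiv x Δ xinf Δinf hxconv hΔnorm hΔsd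
    hΔconv
end

section
/- Adam update is bounded by 1 when β₁ = β₂: let 0 < β < 1, scalars {g_t}_{t≥1}, v_0 ≥ 0, |m_0| ≤ √v_0, define m_t = β m_{t−1} + (1−β) g_t, and suppose v_t > 0 satisfies v_t − β v_{t−1} ≥ (1−β) g_t² for all t ≥ 1. Then |m_t / √v_t| ≤ 1 for all t ≥ 1. -/
/-- Adam update is bounded by 1 when `β₁ = β₂ = β`. -/
theorem adam_update_le_one (β : ℝ) (hβ0 : 0 < β) (hβ1 : β < 1)
    (g m v : ℕ → ℝ) (hv0 : 0 ≤ v 0) (hm0 : |m 0| ≤ Real.sqrt (v 0))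
    (hm : ∀ t, 1 ≤ t → m t = β * m (t - 1) + (1 - β) * g t)
    (hvpos : ∀ t, 1 ≤ t → 0 < v t)
    (hv : ∀ t, 1 ≤ t → (1 - β) * g t ^ 2 ≤ v t - β * v (t - 1)) :
    ∀ t, 1 ≤ t → |m t / Real.sqrt (v t)| ≤ 1 := by
  have key : ∀ t, m t ^ 2 ≤ v t := by
    intro t
    induction t with
    | zero =>
      have h := hm0
      have h2 : |m 0| ^ 2 ≤ Real.sqrt (v 0) ^ 2 := by
        apply pow_le_pow_left₀ (abs_nonneg _) h
      rwa [sq_abs, Real.sq_sqrt hv0] at h2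
    | succ n ih =>
      have h1 : 1 ≤ n + 1 := Nat.le_add_left 1 n
      have hmn := hm (n + 1) h1
      have hvn := hv (n + 1) h1
      simp only [Nat.add_sub_cancel] at hmn hvn
      have hconv : m (n + 1) ^ 2 ≤ β * m n ^ 2 + (1 - β) * g (n + 1) ^ 2 := by
        rw [hmn]
        nlinarith [mul_nonneg (mul_nonneg hβ0.le (sub_pos.mpr hβ1).le) (sq_nonneg (m n - g (n + 1)))]
      nlinarith
  intro t ht
  have hvt := hvpos t ht
  have hs : 0 < Real.sqrt (v t) := Real.sqrt_pos.mpr hvt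
  rw [abs_div, abs_of_pos hs, div_le_one hs]
  have : |m t| ^ 2 ≤ Real.sqrt (v t) ^ 2 := by
    rw [sq_abs, Real.sq_sqrt hvt.le]; exact key t
  nlinarith [abs_nonneg (m t), Real.sqrt_nonneg (v t)]
end

section
/- Cauchy–Schwarz bound for weighted Adam updates: with 0 ≤ β₁ ≤ β₂ < 1, m_t = β₁^t m_0 + (1−β₁)Σ_{i=0}^{t−1} β₁^i g_{t−i}, v_t ≥ β₂^t v_0 + (1−β₂)Σ_{i=0}^{t−1} β₂^i g_{t−i}² with v_t > 0 and m_0² ≤ v_0, and nonnegative coefficients η_t, one has |Σ_{t=1}^T η_t m_t/√v_t| ≤ (Σ_{t=1}^T η_t (β₁^t v_0/v_t + Σ_{i=0}^{t−1}(1−β₁)β₁^i g_{t−i}²/v_t))^{1/2} (Σ_{t=1}^T η_t)^{1/2}. -/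
/-!
The moment `m t` is a convex combination of `m 0` (weight `β₁ ^ t`) and the gradients
`g (t - i)` (weights `(1 - β₁) β₁ ^ i`), so by Jensen `m t ^ 2` is at most the same combination
of `m 0 ^ 2 ≤ v 0` and the `g (t - i) ^ 2`. Dividing by `v t` bounds `(m t / √(v t)) ^ 2`
termwise, and Cauchy–Schwarz with weights `η t` gives the claim.
-/

open Finset

lemma sq_convex_combination_le {β : ℝ} (h₀ : 0 ≤ β) (h₁ : β ≤ 1) (x y : ℝ) :
    (β * x + (1 - β) * y) ^ 2 ≤ β * x ^ 2 + (1 - β) * y ^ 2 := by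
  nlinarith [mul_nonneg (mul_nonneg h₀ (sub_nonneg.2 h₁)) (sq_nonneg (x - y))]

lemma sq_expMovingAverage_le {β : ℝ} (h₀ : 0 ≤ β) (h₁ : β ≤ 1) (g : ℕ → ℝ) (t : ℕ) (x : ℝ) :
    (β ^ t * x + (1 - β) * ∑ i ∈ range t, β ^ i * g i) ^ 2 ≤
      β ^ t * x ^ 2 + ∑ i ∈ range t, (1 - β) * β ^ i * g i ^ 2 := by
  induction t generalizing x with
  | zero => simp
  | succ t ih =>
    -- Splitting off the term `i = t` restarts the average from `β * x + (1 - β) * g t`.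
    calc (β ^ (t + 1) * x + (1 - β) * ∑ i ∈ range (t + 1), β ^ i * g i) ^ 2
        = (β ^ t * (β * x + (1 - β) * g t) + (1 - β) * ∑ i ∈ range t, β ^ i * g i) ^ 2 := by
          rw [sum_range_succ]; ring
      _ ≤ β ^ t * (β * x + (1 - β) * g t) ^ 2 + ∑ i ∈ range t, (1 - β) * β ^ i * g i ^ 2 :=
          ih _
      _ ≤ β ^ t * (β * x ^ 2 + (1 - β) * g t ^ 2) +
            ∑ i ∈ range t, (1 - β) * β ^ i * g i ^ 2 := by
          gcongr
          exact sq_convex_combination_le h₀ h₁ x (g t)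
      _ = β ^ (t + 1) * x ^ 2 + ∑ i ∈ range (t + 1), (1 - β) * β ^ i * g i ^ 2 := by
          rw [sum_range_succ]; ring

lemma abs_sum_mul_le_sqrt_mul_sqrt {ι : Type*} {s : Finset ι} {w a b : ι → ℝ}
    (hw : ∀ i ∈ s, 0 ≤ w i) (hab : ∀ i ∈ s, a i ^ 2 ≤ b i) :
    |∑ i ∈ s, w i * a i| ≤ √(∑ i ∈ s, w i * b i) * √(∑ i ∈ s, w i) := by
  rw [← Real.sqrt_mul' _ (sum_nonneg hw)]
  refine Real.abs_le_sqrt (sum_sq_le_sum_mul_sum_of_sq_le_mul s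
    (fun i hi => mul_nonneg (hw i hi) ((sq_nonneg _).trans (hab i hi))) hw fun i hi => ?_)
  calc (w i * a i) ^ 2 = w i ^ 2 * a i ^ 2 := mul_pow _ _ _
    _ ≤ w i ^ 2 * b i := by gcongr; exact hab i hi
    _ = w i * b i * w i := by ring

theorem adam_weighted_cauchy_schwarz_general (β₁ β₂ : ℝ) (hβ₁ : 0 ≤ β₁) (hβ12 : β₁ ≤ β₂) (hβ₂ : β₂ < 1)
    (g m v : ℕ → ℝ) (η : ℕ → ℝ) (T : ℕ)
    (hm0v0 : m 0 ^ 2 ≤ v 0)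
    (hm : ∀ t, 1 ≤ t →
      m t = β₁ ^ t * m 0 + (1 - β₁) * ∑ i ∈ Finset.range t, β₁ ^ i * g (t - i))
    (hvpos : ∀ t, 1 ≤ t → 0 < v t)
    (hη : ∀ t, 0 ≤ η t) :
    |∑ t ∈ Finset.Icc 1 T, η t * (m t / Real.sqrt (v t))| ≤
      Real.sqrt (∑ t ∈ Finset.Icc 1 T, η t *
          (β₁ ^ t * v 0 / v t +
            ∑ i ∈ Finset.range t, (1 - β₁) * β₁ ^ i * g (t - i) ^ 2 / v t)) *
        Real.sqrt (∑ t ∈ Finset.Icc 1 T, η t) := by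
  refine abs_sum_mul_le_sqrt_mul_sqrt (fun t _ => hη t) fun t ht => ?_
  have ht₁ : 1 ≤ t := (mem_Icc.mp ht).1
  have hvt : 0 < v t := hvpos t ht₁
  have hmt : m t ^ 2 ≤ β₁ ^ t * v 0 + ∑ i ∈ range t, (1 - β₁) * β₁ ^ i * g (t - i) ^ 2 := by
    rw [hm t ht₁]
    grw [sq_expMovingAverage_le hβ₁ (hβ12.trans hβ₂.le) (fun i => g (t - i)) t (m 0), hm0v0]
  rw [div_pow, Real.sq_sqrt hvt.le, ← sum_div, ← add_div]
  gcongr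

/-- Cauchy–Schwarz bound for weighted Adam updates. -/
theorem adam_weighted_cauchy_schwarz (β₁ β₂ : ℝ) (hβ₁ : 0 ≤ β₁) (hβ12 : β₁ ≤ β₂) (hβ₂ : β₂ < 1)
    (g m v : ℕ → ℝ) (η : ℕ → ℝ) (T : ℕ)
    (hm0v0 : m 0 ^ 2 ≤ v 0)
    (hm : ∀ t, 1 ≤ t →
      m t = β₁ ^ t * m 0 + (1 - β₁) * ∑ i ∈ Finset.range t, β₁ ^ i * g (t - i))
    (hvpos : ∀ t, 1 ≤ t → 0 < v t)
    (hv : ∀ t, 1 ≤ t →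
      β₂ ^ t * v 0 + (1 - β₂) * ∑ i ∈ Finset.range t, β₂ ^ i * g (t - i) ^ 2 ≤ v t)
    (hη : ∀ t, 0 ≤ η t) :
    |∑ t ∈ Finset.Icc 1 T, η t * (m t / Real.sqrt (v t))| ≤
      Real.sqrt (∑ t ∈ Finset.Icc 1 T, η t *
          (β₁ ^ t * v 0 / v t +
            ∑ i ∈ Finset.range t, (1 - β₁) * β₁ ^ i * g (t - i) ^ 2 / v t)) *
        Real.sqrt (∑ t ∈ Finset.Icc 1 T, η t) :=
  adam_weighted_cauchy_schwarz_general β₁ β₂ hβ₁ hβ12 hβ₂ g m v η T hm0v0 hm hvpos hη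
end

section
/- In the counterexample regime with β₁ > β₂, the AdamW iterate ratio m_t/√v_t is the constant c = ((1−β₁)/(1−λη−β₁)) / √((1−β₂)/((1−λη)²−β₂)), and consequently the iterates x_t of x_t = x_{t−1} − η m_t/√v_t − λη x_{t−1} satisfy x_t − x̃ = (1−λη)^t (x_0 − x̃) where x̃ = −c/λ; in particular x_t converges to x̃. -/
/-!
Write `a = 1 - λη`. The initialisation puts `m` and `v` at the fixed points of the moment
recursions for a gradient that decays geometrically at rate `a`: `m_t = K₁ g` and `v_t = K₂ g²`
with `K₁ = (1-β₁)/(a-β₁)` and `K₂ = (1-β₂)/(a²-β₂)`. As long as the gradient is positive, the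
ratio `m_t/√v_t` is therefore the constant `c = K₁/√K₂`, and the AdamW step becomes the affine
contraction `x ↦ a x - ηc` with fixed point `x̃ = -c/λ`. This contraction makes the gradient
`x_t - x̃` decay at rate `a` again, which closes the induction.
-/

open Filter Topology

theorem ema_geometric_step {β r : ℝ} (hr : r ≠ β) (s : ℝ) :
    β * ((1 - β) / (r - β) * s) + (1 - β) * s = (1 - β) / (r - β) * (r * s) := by
  field_simp [sub_ne_zero.mpr hr]
  ring

theorem mul_div_sqrt_mul_sq {p q s : ℝ} (hs : 0 < s) : p * s / √(q * s ^ 2) = p / √q := by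
  rw [Real.sqrt_mul' q (sq_nonneg s), Real.sqrt_sq hs.le, mul_div_mul_right _ _ hs.ne']

theorem weight_decay_step_sub_fixedPoint {lam η c : ℝ} (hlam : lam ≠ 0) (y : ℝ) :
    y - η * c - lam * η * y - -c / lam = (1 - lam * η) * (y - -c / lam) := by
  field_simp
  ring

theorem tendsto_of_sub_eq_pow_mul {x : ℕ → ℝ} {L a C : ℝ} (ha : |a| < 1)
    (hx : ∀ t, x t - L = a ^ t * C) : Tendsto x atTop (𝓝 L) := by
  have h := ((tendsto_pow_atTop_nhds_zero_of_abs_lt_one ha).mul_const C).add_const L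
  rw [zero_mul, zero_add] at h
  exact h.congr fun t => by linarith [hx t]

theorem adamw_state_eq {lam η β₁ β₂ c xt : ℝ} {x g m v : ℕ → ℝ}
    (hlam : lam ≠ 0) (ha : 0 < 1 - lam * η)
    (hβ₁ : 1 - lam * η ≠ β₁) (hβ₂ : (1 - lam * η) ^ 2 ≠ β₂)
    (hc : c = ((1 - β₁) / (1 - lam * η - β₁)) /
        Real.sqrt ((1 - β₂) / ((1 - lam * η) ^ 2 - β₂)))
    (hxt : xt = -c / lam) (hx0 : xt < x 0)
    (hg : ∀ t, 1 ≤ t → g t = x (t - 1) - xt)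
    (hm0 : m 0 = (1 - β₁) / (1 - lam * η - β₁) * g 1)
    (hv0 : v 0 = (1 - β₂) / ((1 - lam * η) ^ 2 - β₂) * g 1 ^ 2)
    (hm : ∀ t, 1 ≤ t → m t = β₁ * m (t - 1) + (1 - β₁) * g t)
    (hv : ∀ t, 1 ≤ t → v t = β₂ * v (t - 1) + (1 - β₂) * g t ^ 2)
    (hxrec : ∀ t, 1 ≤ t →
      x t = x (t - 1) - η * (m t / Real.sqrt (v t)) - lam * η * x (t - 1)) (t : ℕ) :
    x t - xt = (1 - lam * η) ^ t * (x 0 - xt) ∧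
      m t = (1 - β₁) / (1 - lam * η - β₁) * ((1 - lam * η) ^ t * (x 0 - xt)) ∧
      v t = (1 - β₂) / ((1 - lam * η) ^ 2 - β₂) * ((1 - lam * η) ^ t * (x 0 - xt)) ^ 2 := by
  set a := 1 - lam * η
  have hg1 : g 1 = x 0 - xt := hg 1 le_rfl
  induction t with
  | zero => simp [hm0, hv0, hg1]
  | succ t ih =>
    obtain ⟨hx, hmt, hvt⟩ := ih
    have ht : 1 ≤ t + 1 := Nat.le_add_left 1 t
    have hs : 0 < a ^ (t + 1) * (x 0 - xt) := mul_pos (pow_pos ha _) (sub_pos.mpr hx0)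
    have hgt : g (t + 1) = a ^ t * (x 0 - xt) := by
      rw [hg _ ht, Nat.add_sub_cancel, hx]
    have hm' : m (t + 1) = (1 - β₁) / (a - β₁) * (a ^ (t + 1) * (x 0 - xt)) := by
      rw [hm _ ht, Nat.add_sub_cancel, hmt, hgt, ema_geometric_step hβ₁, pow_succ]
      ring
    have hv' : v (t + 1) = (1 - β₂) / (a ^ 2 - β₂) * (a ^ (t + 1) * (x 0 - xt)) ^ 2 := by
      rw [hv _ ht, Nat.add_sub_cancel, hvt, hgt, ema_geometric_step hβ₂, pow_succ]
      ring
    have hratio : m (t + 1) / √(v (t + 1)) = c := by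
      rw [hm', hv', mul_div_sqrt_mul_sq hs, hc]
    refine ⟨?_, hm', hv'⟩
    rw [hxrec _ ht, Nat.add_sub_cancel, hratio, hxt,
      weight_decay_step_sub_fixedPoint hlam, ← hxt, hx, pow_succ]
    ring

theorem adamw_counterexample_general (lam η β₁ β₂ : ℝ)
    (hlam : 0 < lam) (hη : 0 < η) (hle : lam * η < 1)
    (hβ₁1 : β₁ < 1 - lam * η)
    (hβ₂' : β₂ < (1 - lam * η) ^ 2)
    (c xt : ℝ)
    (hc : c = ((1 - β₁) / (1 - lam * η - β₁)) /
        Real.sqrt ((1 - β₂) / ((1 - lam * η) ^ 2 - β₂)))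
    (hxt : xt = -c / lam)
    (x g m v : ℕ → ℝ) (hx0 : xt < x 0)
    (hg : ∀ t, 1 ≤ t → g t = x (t - 1) - xt)
    (hm0 : m 0 = (1 - β₁) / (1 - lam * η - β₁) * g 1)
    (hv0 : v 0 = (1 - β₂) / ((1 - lam * η) ^ 2 - β₂) * g 1 ^ 2)
    (hm : ∀ t, 1 ≤ t → m t = β₁ * m (t - 1) + (1 - β₁) * g t)
    (hv : ∀ t, 1 ≤ t → v t = β₂ * v (t - 1) + (1 - β₂) * g t ^ 2)
    (hxrec : ∀ t, 1 ≤ t →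
      x t = x (t - 1) - η * (m t / Real.sqrt (v t)) - lam * η * x (t - 1)) :
    (∀ t, 1 ≤ t → m t / Real.sqrt (v t) = c) ∧
      (∀ t, x t - xt = (1 - lam * η) ^ t * (x 0 - xt)) ∧
      Tendsto x atTop (nhds xt) := by
  have ha : 0 < 1 - lam * η := by linarith
  have ha1 : |1 - lam * η| < 1 := by
    rw [abs_of_pos ha]
    linarith [mul_pos hlam hη]
  have hstate := adamw_state_eq hlam.ne' ha hβ₁1.ne' hβ₂'.ne' hc hxt hx0 hg hm0 hv0 hm hv hxrec
  refine ⟨fun t _ => ?_, fun t => (hstate t).1, tendsto_of_sub_eq_pow_mul ha1 fun t => (hstate t).1⟩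
  obtain ⟨-, hmt, hvt⟩ := hstate t
  rw [hmt, hvt, mul_div_sqrt_mul_sq (mul_pos (pow_pos ha t) (sub_pos.mpr hx0)), hc]

/-- in the counterexample regime with `β₁ > β₂`, the AdamW ratio `m_t/√v_t` is
the constant `c`, the iterates satisfy `x_t - x̃ = (1-λη)^t (x_0 - x̃)` where `x̃ = -c/λ`,
and `x_t → x̃`. -/
theorem adamw_counterexample (lam η β₁ β₂ : ℝ)
    (hlam : 0 < lam) (hη : 0 < η) (hle : lam * η < 1)
    (hβ₂0 : 0 < β₂) (hβ21 : β₂ < β₁) (hβ₁1 : β₁ < 1 - lam * η)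
    (hβ₂' : β₂ < (1 - lam * η) ^ 2)
    (c xt : ℝ)
    (hc : c = ((1 - β₁) / (1 - lam * η - β₁)) /
        Real.sqrt ((1 - β₂) / ((1 - lam * η) ^ 2 - β₂)))
    (hxt : xt = -c / lam)
    (x g m v : ℕ → ℝ) (hx0 : xt < x 0)
    (hg : ∀ t, 1 ≤ t → g t = x (t - 1) - xt)
    (hm0 : m 0 = (1 - β₁) / (1 - lam * η - β₁) * g 1)
    (hv0 : v 0 = (1 - β₂) / ((1 - lam * η) ^ 2 - β₂) * g 1 ^ 2)
    (hm : ∀ t, 1 ≤ t → m t = β₁ * m (t - 1) + (1 - β₁) * g t)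
    (hv : ∀ t, 1 ≤ t → v t = β₂ * v (t - 1) + (1 - β₂) * g t ^ 2)
    (hxrec : ∀ t, 1 ≤ t →
      x t = x (t - 1) - η * (m t / Real.sqrt (v t)) - lam * η * x (t - 1)) :
    (∀ t, 1 ≤ t → m t / Real.sqrt (v t) = c) ∧
      (∀ t, x t - xt = (1 - lam * η) ^ t * (x 0 - xt)) ∧
      Tendsto x atTop (nhds xt) :=
  adamw_counterexample_general lam η β₁ β₂ hlam hη hle hβ₁1 hβ₂' c xt hc hxt x g m v hx0 hg hm0 hv0
    hm hv hxrec
end
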